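/- arXiv:0901.2372 — 2 statements merged into one kernel-verified Lean document; each statement's English description precedes it below -/
import Mathlib

section
/- Let C be a category with a zero object and a class of morphisms called deflations satisfying axioms (0)–(3) of a weakly exact category together with: (4a) the pullback of a deflation along a deflation exists and is a deflation; and (4b) given a commutative diagram where φ₂ : A₂ → A₃ and φ₂' : B₂ → A₃ are deflations with kernels φ₁ : A₁ → A₂ and φ₁' : B₁ → B₂ respectively, and vertical morphisms f₁ : A₁ → B₁, f₂ : A₂ → B₂ with φ₂'∘f₂ = φ₂ and f₂∘φ₁ = φ₁'∘f₁, the morphism f₁ is a deflation if and only if f₂ is a deflation. Then axiom (4) holds: given a commutative diagram with short exact rows A₁ → A₂ → A₃ and B₁ → B₂ → B₃ in which the vertical morphisms f₁, f₂, f₃ are deflations with kernels K₁, K₂, K₃, the induced sequence K₁ → K₂ → K₃ is short exact. -/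
open CategoryTheory CategoryTheory.Limits

universe v u

section Defs

variable {C : Type u} [Category.{v} C] [HasZeroMorphisms C]

/-- `i : K ⟶ A` is a kernel of `p : A ⟶ B`. -/
def IsKernelOf {K A B : C} (i : K ⟶ A) (p : A ⟶ B) : Prop :=
  i ≫ p = 0 ∧ ∀ ⦃W : C⦄ (g : W ⟶ A), g ≫ p = 0 → ∃! h : W ⟶ K, h ≫ i = g

/-- `q : B ⟶ Q` is a cokernel of `i : A ⟶ B`. -/
def IsCokernelOf {A B Q : C} (q : B ⟶ Q) (i : A ⟶ B) : Prop :=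
  i ≫ q = 0 ∧ ∀ ⦃W : C⦄ (g : B ⟶ W), i ≫ g = 0 → ∃! h : Q ⟶ W, q ≫ h = g

variable (D : MorphismProperty C)

/-- `A ⟶ B ⟶ Q` is a short exact sequence for the class of deflations `D`:
`p` is a deflation and `i` is a kernel of `p`. -/
def IsShortExact {A B Q : C} (i : A ⟶ B) (p : B ⟶ Q) : Prop :=
  D p ∧ IsKernelOf i p

/-- An inflation is a kernel of some deflation. -/
def IsInflation {A B : C} (i : A ⟶ B) : Prop :=
  ∃ (Q : C) (p : B ⟶ Q), D p ∧ IsKernelOf i p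

/-- The axioms for a weakly exact category: `D` is the class of deflations.
Axiom (0): isomorphisms and morphisms to a zero object are deflations;
Axiom (1): a deflation has a kernel and is a cokernel of its kernel;
Axiom (2): deflations are closed under composition;
Axiom (3): if `g ∘ f` and `f` are deflations then so is `g`;
Axiom (4): the 3×3 lemma. -/
structure IsWeaklyExact : Prop where
  defl_of_isIso : ∀ ⦃X Y : C⦄ (f : X ⟶ Y), IsIso f → D f
  defl_to_zero : ∀ ⦃X Y : C⦄ (f : X ⟶ Y), IsZero Y → D f
  defl_kernel : ∀ ⦃X Y : C⦄ (p : X ⟶ Y), D p →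
    ∃ (K : C) (i : K ⟶ X), IsKernelOf i p ∧ IsCokernelOf p i
  defl_comp : ∀ ⦃X Y Z : C⦄ (f : X ⟶ Y) (g : Y ⟶ Z), D f → D g → D (f ≫ g)
  defl_cancel : ∀ ⦃X Y Z : C⦄ (f : X ⟶ Y) (g : Y ⟶ Z), D (f ≫ g) → D f → D g
  three_by_three : ∀ ⦃A₁ A₂ A₃ B₁ B₂ B₃ C₁ C₂ C₃ : C⦄
    (a₁ : A₁ ⟶ A₂) (a₂ : A₂ ⟶ A₃) (b₁ : B₁ ⟶ B₂) (b₂ : B₂ ⟶ B₃)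
    (c₁ : C₁ ⟶ C₂) (c₂ : C₂ ⟶ C₃)
    (f₁ : A₁ ⟶ B₁) (f₂ : A₂ ⟶ B₂) (f₃ : A₃ ⟶ B₃)
    (g₁ : B₁ ⟶ C₁) (g₂ : B₂ ⟶ C₂) (g₃ : B₃ ⟶ C₃),
    a₁ ≫ f₂ = f₁ ≫ b₁ → a₂ ≫ f₃ = f₂ ≫ b₂ →
    b₁ ≫ g₂ = g₁ ≫ c₁ → b₂ ≫ g₃ = g₂ ≫ c₂ →
    IsShortExact D f₁ g₁ → IsShortExact D f₂ g₂ → IsShortExact D f₃ g₃ →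
    IsShortExact D b₁ b₂ → IsShortExact D c₁ c₂ →
    IsShortExact D a₁ a₂

end Defs

section Helpers

variable {C : Type u} [Category.{v} C] [HasZeroMorphisms C]

lemma IsKernelOf.mono {K A B : C} {i : K ⟶ A} {p : A ⟶ B}
    (h : IsKernelOf i p) : Mono i := by
  constructor
  intro Z a b hab
  have hz : (b ≫ i) ≫ p = 0 := by rw [Category.assoc, h.1, comp_zero]
  obtain ⟨u, -, hu⟩ := h.2 (b ≫ i) hz
  exact (hu a hab).trans (hu b rfl).symm

end Helpers


/-- **Section 4.**  For a category with a zero object and a class of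
deflations satisfying axioms (0)–(3) of a weakly exact category together with
(4a) (pullbacks of deflations along deflations exist and are deflations) and
(4b), axiom (4) holds: given a commutative diagram with short exact rows whose
vertical morphisms `f₁, f₂, f₃` are deflations with kernels `K₁, K₂, K₃`, the
induced sequence `K₁ ⟶ K₂ ⟶ K₃` is short exact. -/
theorem axiom4_of_axiom4a_axiom4b {C : Type u} [Category.{v} C]
    [HasZeroMorphisms C] [HasZeroObject C] (D : MorphismProperty C)
    (ax0a : ∀ ⦃X Y : C⦄ (f : X ⟶ Y), IsIso f → D f)
    (ax0b : ∀ ⦃X Y : C⦄ (f : X ⟶ Y), IsZero Y → D f)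
    (ax1 : ∀ ⦃X Y : C⦄ (p : X ⟶ Y), D p →
      ∃ (K : C) (i : K ⟶ X), IsKernelOf i p ∧ IsCokernelOf p i)
    (ax2 : ∀ ⦃X Y Z : C⦄ (f : X ⟶ Y) (g : Y ⟶ Z), D f → D g → D (f ≫ g))
    (ax3 : ∀ ⦃X Y Z : C⦄ (f : X ⟶ Y) (g : Y ⟶ Z), D (f ≫ g) → D f → D g)
    (ax4a : ∀ ⦃X Y Z : C⦄ (p : X ⟶ Z) (q : Y ⟶ Z), D p → D q →
      ∃ (P : C) (fst : P ⟶ X) (snd : P ⟶ Y), IsPullback fst snd p q ∧ D snd)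
    (ax4b : ∀ ⦃A₁ A₂ A₃ B₁ B₂ : C⦄ (φ₂ : A₂ ⟶ A₃) (φ₂' : B₂ ⟶ A₃)
      (φ₁ : A₁ ⟶ A₂) (φ₁' : B₁ ⟶ B₂) (f₁ : A₁ ⟶ B₁) (f₂ : A₂ ⟶ B₂),
      D φ₂ → D φ₂' → IsKernelOf φ₁ φ₂ → IsKernelOf φ₁' φ₂' →
      f₂ ≫ φ₂' = φ₂ → φ₁ ≫ f₂ = f₁ ≫ φ₁' → (D f₁ ↔ D f₂))
    {A₁ A₂ A₃ B₁ B₂ B₃ K₁ K₂ K₃ : C}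
    (φ₁ : A₁ ⟶ A₂) (φ₂ : A₂ ⟶ A₃) (φ₁' : B₁ ⟶ B₂) (φ₂' : B₂ ⟶ B₃)
    (f₁ : A₁ ⟶ B₁) (f₂ : A₂ ⟶ B₂) (f₃ : A₃ ⟶ B₃)
    (sq₁ : φ₁ ≫ f₂ = f₁ ≫ φ₁') (sq₂ : φ₂ ≫ f₃ = f₂ ≫ φ₂')
    (hrow₁ : IsShortExact D φ₁ φ₂) (hrow₂ : IsShortExact D φ₁' φ₂')
    (hf₁ : D f₁) (hf₂ : D f₂) (hf₃ : D f₃)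
    (k₁ : K₁ ⟶ A₁) (k₂ : K₂ ⟶ A₂) (k₃ : K₃ ⟶ A₃)
    (hk₁ : IsKernelOf k₁ f₁) (hk₂ : IsKernelOf k₂ f₂) (hk₃ : IsKernelOf k₃ f₃)
    (ψ₁ : K₁ ⟶ K₂) (hψ₁ : ψ₁ ≫ k₂ = k₁ ≫ φ₁)
    (ψ₂ : K₂ ⟶ K₃) (hψ₂ : ψ₂ ≫ k₃ = k₂ ≫ φ₂) :
    IsShortExact D ψ₁ ψ₂ := by
  -- `φ₁`, `φ₁'`, `k₁`, `k₂`, `k₃` are monomorphisms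
  have mφ₁ : Mono φ₁ := hrow₁.2.mono
  have mφ₁' : Mono φ₁' := hrow₂.2.mono
  have mk₂ : Mono k₂ := hk₂.mono
  have mk₃ : Mono k₃ := hk₃.mono
  have mk₁ : Mono k₁ := hk₁.mono
  -- form the pullback of f₃ along φ₂'
  obtain ⟨P, p, q, hP, hq⟩ := ax4a f₃ φ₂' hf₃ hrow₂.1
  -- the other projection is also a deflation
  have hp : D p := by
    obtain ⟨P', fst', snd', hP', hsnd'⟩ := ax4a φ₂' f₃ hrow₂.1 hf₃
    have he : (hP.flip.isoIsPullback _ _ hP').hom ≫ snd' = p :=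
      IsPullback.isoIsPullback_hom_snd (h := hP.flip) (h' := hP')
    rw [← he]
    exact ax2 _ _ (ax0a _ inferInstance) hsnd'
  -- the induced morphism u : A₂ ⟶ P
  let u : A₂ ⟶ P := hP.lift φ₂ f₂ sq₂
  have hup : u ≫ p = φ₂ := hP.lift_fst _ _ _
  have huq : u ≫ q = f₂ := hP.lift_snd _ _ _
  -- j : K₃ ⟶ P is a kernel of q
  have hk₃0 : k₃ ≫ f₃ = (0 : K₃ ⟶ B₂) ≫ φ₂' := by rw [hk₃.1, zero_comp]
  let j : K₃ ⟶ P := hP.lift k₃ 0 hk₃0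
  have hjp : j ≫ p = k₃ := hP.lift_fst _ _ _
  have hjq : j ≫ q = 0 := hP.lift_snd _ _ _
  have hjker : IsKernelOf j q := by
    refine ⟨hjq, fun W g hg => ?_⟩
    have hgp : (g ≫ p) ≫ f₃ = 0 := by
      rw [Category.assoc, hP.w, ← Category.assoc, hg, zero_comp]
    obtain ⟨h, hh, hh'⟩ := hk₃.2 (g ≫ p) hgp
    refine ⟨h, ?_, fun y hy => ?_⟩
    · apply hP.hom_ext
      · rw [Category.assoc, hjp, hh]
      · rw [Category.assoc, hjq, comp_zero, hg]
    · apply mk₃.right_cancellation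
      rw [← hjp, ← Category.assoc, hy, hjp, hh]
  -- j' : B₁ ⟶ P is a kernel of p
  have hφ₁'0 : (0 : B₁ ⟶ A₃) ≫ f₃ = φ₁' ≫ φ₂' := by rw [hrow₂.2.1, zero_comp]
  let j' : B₁ ⟶ P := hP.lift 0 φ₁' hφ₁'0
  have hj'p : j' ≫ p = 0 := hP.lift_fst _ _ _
  have hj'q : j' ≫ q = φ₁' := hP.lift_snd _ _ _
  have hj'ker : IsKernelOf j' p := by
    refine ⟨hj'p, fun W g hg => ?_⟩
    have hgq : (g ≫ q) ≫ φ₂' = 0 := by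
      rw [Category.assoc, ← hP.w, ← Category.assoc, hg, zero_comp]
    obtain ⟨h, hh, hh'⟩ := hrow₂.2.2 (g ≫ q) hgq
    refine ⟨h, ?_, fun y hy => ?_⟩
    · apply hP.hom_ext
      · rw [Category.assoc, hj'p, comp_zero, hg]
      · rw [Category.assoc, hj'q, hh]
    · apply mφ₁'.right_cancellation
      rw [← hj'q, ← Category.assoc, hy, hj'q, hh]
  -- u is a deflation, by ax4b applied to f₁ and u over A₃
  have hsq : φ₁ ≫ u = f₁ ≫ j' := by
    apply hP.hom_ext
    · rw [Category.assoc, Category.assoc, hup, hj'p, hrow₁.2.1, comp_zero]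
    · rw [Category.assoc, Category.assoc, huq, hj'q, sq₁]
  have hu : D u :=
    (ax4b φ₂ p φ₁ j' f₁ u hrow₁.1 hp hrow₁.2 hj'ker hup hsq).mp hf₁
  -- ψ₂ is a deflation, by ax4b applied to ψ₂ and u over B₂
  have hsq' : k₂ ≫ u = ψ₂ ≫ j := by
    apply hP.hom_ext
    · rw [Category.assoc, Category.assoc, hup, hjp, hψ₂]
    · rw [Category.assoc, Category.assoc, huq, hjq, hk₂.1, comp_zero]
  have hψ₂D : D ψ₂ :=
    (ax4b f₂ q k₂ j ψ₂ u hf₂ hq hk₂ hjker huq hsq').mpr hu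
  -- ψ₁ is a kernel of ψ₂
  refine ⟨hψ₂D, ?_, fun W g hg => ?_⟩
  · apply mk₃.right_cancellation
    rw [Category.assoc, hψ₂, ← Category.assoc, hψ₁, Category.assoc,
      hrow₁.2.1, comp_zero, zero_comp]
  · -- g ≫ k₂ kills φ₂, so factors through φ₁
    have h1 : (g ≫ k₂) ≫ φ₂ = 0 := by
      rw [Category.assoc, ← hψ₂, ← Category.assoc, hg, zero_comp]
    obtain ⟨t, ht, -⟩ := hrow₁.2.2 (g ≫ k₂) h1
    -- t kills f₁, so factors through k₁
    have h2 : t ≫ f₁ = 0 := by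
      apply mφ₁'.right_cancellation
      rw [Category.assoc, ← sq₁, ← Category.assoc, ht, Category.assoc,
        hk₂.1, comp_zero, zero_comp]
    obtain ⟨h, hh, -⟩ := hk₁.2 t h2
    refine ⟨h, ?_, fun y hy => ?_⟩
    · apply mk₂.right_cancellation
      rw [Category.assoc, hψ₁, ← Category.assoc, hh, ht]
    · apply mk₁.right_cancellation
      apply mφ₁.right_cancellation
      rw [Category.assoc, Category.assoc, ← hψ₁, ← Category.assoc y,
        hy, hψ₁, ← Category.assoc, hh, ht]
end

section
/- In a weakly exact category, let A → A' → A'' be a short exact sequence of differential objects (objects equipped with an admissible morphism d with d∘d = 0, the morphisms of the sequence commuting with the differentials). Then there is a natural morphism H(A'') → H(A) such that the triangle H(A) → H(A') → H(A'') → H(A) is exact at each vertex, i.e. the long sequence ⋯ → H(A) → H(A') → H(A'') → H(A) → H(A') → ⋯ is exact. -/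
open CategoryTheory CategoryTheory.Limits

universe v u

section DiffObj

variable {C : Type u} [Category.{v} C] [HasZeroMorphisms C]

/-- A differential object `(A, d)` in a weakly exact category, with `d`
admissible (a deflation `e` onto the image `I` followed by an inflation `m`),
together with the canonical data computing its cohomology `H`: the cokernel
`c : A ⟶ CoA` of `m : I ⟶ A`, the induced (deflation) `t : CoA ⟶ I`
(characterised by `c ≫ t = e`), and `H` the kernel of `t`. -/
structure DiffObjData (D : MorphismProperty C) where
  A : C
  d : A ⟶ A
  dd : d ≫ d = 0
  I : C
  e : A ⟶ I
  m : I ⟶ A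
  fac : e ≫ m = d
  defl_e : D e
  infl_m : IsInflation D m
  CoA : C
  c : A ⟶ CoA
  coker : IsCokernelOf c m
  t : CoA ⟶ I
  ht : c ≫ t = e
  H : C
  k : H ⟶ CoA
  ker : IsKernelOf k t

/-- A morphism of differential objects, together with the induced morphisms
on the cokernels and on cohomology (each characterised by the corresponding
commutation relation, hence unique). -/
structure DiffHomData (D : MorphismProperty C) (X Y : DiffObjData D) where
  u : X.A ⟶ Y.A
  comm : X.d ≫ u = u ≫ Y.d
  ubar : X.CoA ⟶ Y.CoA
  hubar : X.c ≫ ubar = u ≫ Y.c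
  Hu : X.H ⟶ Y.H
  hHu : Hu ≫ Y.k = X.k ≫ ubar

end DiffObj

section ExactAt

variable {C : Type u} [Category.{v} C] [HasZeroMorphisms C] (D : MorphismProperty C)

/-- Exactness at `Y` of a composable pair `u : X ⟶ Y`, `v : Y ⟶ Z`
(Definition 1.1): `u` factors as `X ⟶ Z₁ ⟶ Y` and `v` as `Y ⟶ Z₂ ⟶ Z` with
`Z₁ ⟶ Y ⟶ Z₂` short exact. -/
def ExactAt {X Y Z : C} (u : X ⟶ Y) (v : Y ⟶ Z) : Prop :=
  ∃ (Z₁ Z₂ : C) (e : X ⟶ Z₁) (ι : Z₁ ⟶ Y) (π : Y ⟶ Z₂) (m : Z₂ ⟶ Z),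
    u = e ≫ ι ∧ v = π ≫ m ∧ IsShortExact D ι π

end ExactAt

section Helpers

variable {C : Type u} [Category.{v} C] [HasZeroMorphisms C] {D : MorphismProperty C}

lemma IsKernelOf.mono_cancel {K A B : C} {i : K ⟶ A} {p : A ⟶ B} (h : IsKernelOf i p)
    {T : C} {f g : T ⟶ K} (hfg : f ≫ i = g ≫ i) : f = g := by
  obtain ⟨l, -, hu⟩ := h.2 (g ≫ i) (by rw [Category.assoc, h.1, comp_zero])
  rw [hu f hfg, hu g rfl]

lemma IsKernelOf.mono_cancel_zero {K A B : C} {i : K ⟶ A} {p : A ⟶ B} (h : IsKernelOf i p)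
    {T : C} {f : T ⟶ K} (hf : f ≫ i = 0) : f = 0 :=
  h.mono_cancel (by rw [hf, zero_comp])

lemma IsCokernelOf.epi_cancel {A B Q : C} {q : B ⟶ Q} {i : A ⟶ B} (h : IsCokernelOf q i)
    {T : C} {f g : Q ⟶ T} (hfg : q ≫ f = q ≫ g) : f = g := by
  obtain ⟨l, -, hu⟩ := h.2 (q ≫ g) (by rw [← Category.assoc, h.1, zero_comp])
  rw [hu f hfg, hu g rfl]

lemma IsCokernelOf.epi_cancel_zero {A B Q : C} {q : B ⟶ Q} {i : A ⟶ B} (h : IsCokernelOf q i)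
    {T : C} {f : Q ⟶ T} (hf : q ≫ f = 0) : f = 0 :=
  h.epi_cancel (by rw [hf, comp_zero])

lemma coker_of_isKernelOf (hD : IsWeaklyExact D) {A B K : C} {p : A ⟶ B} {i : K ⟶ A}
    (hp : D p) (hi : IsKernelOf i p) : IsCokernelOf p i := by
  obtain ⟨K₀, i₀, hk₀, hc₀⟩ := hD.defl_kernel p hp
  refine ⟨hi.1, ?_⟩
  intro W g hg
  obtain ⟨ψ, hψ, -⟩ := hi.2 i₀ hk₀.1
  exact hc₀.2 g (by rw [← hψ, Category.assoc, hg, comp_zero])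

lemma defl_epi_cancel (hD : IsWeaklyExact D) {A B : C} {p : A ⟶ B} (hp : D p)
    {T : C} {f g : B ⟶ T} (hfg : p ≫ f = p ≫ g) : f = g := by
  obtain ⟨K₀, i₀, hk₀, hc₀⟩ := hD.defl_kernel p hp
  exact hc₀.epi_cancel hfg

lemma defl_epi_cancel_zero (hD : IsWeaklyExact D) {A B : C} {p : A ⟶ B} (hp : D p)
    {T : C} {f : B ⟶ T} (hf : p ≫ f = 0) : f = 0 :=
  defl_epi_cancel hD hp (by rw [hf, comp_zero])

lemma infl_ker_coker (hD : IsWeaklyExact D) {M B Q : C} {m : M ⟶ B} {c : B ⟶ Q}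
    (hm : IsInflation D m) (hc : IsCokernelOf c m) : IsShortExact D m c := by
  obtain ⟨Q₀, p, hp, hkp⟩ := hm
  have hcp : IsCokernelOf p m := coker_of_isKernelOf hD hp hkp
  obtain ⟨φ, hφ, -⟩ := hcp.2 c hc.1
  obtain ⟨ψ, hψ, -⟩ := hc.2 p hcp.1
  have hφψ : φ ≫ ψ = 𝟙 _ := by
    refine hcp.epi_cancel ?_
    rw [← Category.assoc, hφ, hψ, Category.comp_id]
  have hψφ : ψ ≫ φ = 𝟙 _ := by
    refine hc.epi_cancel ?_
    rw [← Category.assoc, hψ, hφ, Category.comp_id]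
  have hDc : D c := by
    rw [← hφ]
    exact hD.defl_comp p φ hp (hD.defl_of_isIso φ ⟨ψ, hφψ, hψφ⟩)
  refine ⟨hDc, hc.1, ?_⟩
  intro W g hg
  have hgp : g ≫ p = 0 := by rw [← hψ, ← Category.assoc, hg, zero_comp]
  exact hkp.2 g hgp

lemma ses_id_zero (hD : IsWeaklyExact D) (X Z₀ : C) (hZ₀ : IsZero Z₀) :
    IsShortExact D (𝟙 X) (0 : X ⟶ Z₀) := by
  refine ⟨hD.defl_to_zero _ hZ₀, by simp, ?_⟩
  intro W g _
  exact ⟨g, by simp, fun y hy => by simpa using hy⟩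

lemma ses_zero_id (hD : IsWeaklyExact D) (Z₀ W : C) (hZ₀ : IsZero Z₀) :
    IsShortExact D (0 : Z₀ ⟶ W) (𝟙 W) := by
  refine ⟨hD.defl_of_isIso _ (by infer_instance), by simp, ?_⟩
  intro T g hg
  simp only [Category.comp_id] at hg
  exact ⟨0, by simp [hg], fun y _ => hZ₀.eq_of_tgt y 0⟩

/-- Pullback of a deflation along an inflation. -/
lemma PBlem (hD : IsWeaklyExact D) [HasZeroObject C]
    {A A' A'' M CC P : C}
    {u : A ⟶ A'} {v : A' ⟶ A''} {mm : M ⟶ A''} {cc : A'' ⟶ CC}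
    {jP : P ⟶ A'} {σP : P ⟶ M} {ωP : A ⟶ P}
    (h1 : IsShortExact D u v) (h2 : IsShortExact D mm cc)
    (hj : IsKernelOf jP (v ≫ cc))
    (hσ : σP ≫ mm = jP ≫ v) (hω : ωP ≫ jP = u) :
    IsShortExact D ωP σP := by
  obtain ⟨Z₀, hZ₀⟩ := HasZeroObject.zero (C := C)
  have hDvc : D (v ≫ cc) := hD.defl_comp v cc h1.1 h2.1
  refine hD.three_by_three ωP σP u v (0 : Z₀ ⟶ CC) (𝟙 CC)
    (𝟙 A) jP mm (0 : A ⟶ Z₀) (v ≫ cc) cc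
    (by rw [hω, Category.id_comp]) hσ ?_ (by rw [Category.comp_id])
    (ses_id_zero hD A Z₀ hZ₀) ⟨hDvc, hj⟩ h2 h1 (ses_zero_id hD Z₀ CC hZ₀)
  · rw [← Category.assoc, h1.2.1, zero_comp, zero_comp]

/-- quotient of nested kernels. -/
lemma KKlem (hD : IsWeaklyExact D) [HasZeroObject C]
    {Y W₁ W₂ N₁ N₂ R : C}
    {n₁ : N₁ ⟶ Y} {p₁ : Y ⟶ W₁} {n₂ : N₂ ⟶ Y} {p₂ : Y ⟶ W₂}
    {n₁₂ : N₁ ⟶ N₂} {r : W₁ ⟶ W₂} {kr : R ⟶ W₁} {a₂ : N₂ ⟶ R}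
    (h1 : IsShortExact D n₁ p₁) (h2 : IsShortExact D n₂ p₂)
    (h3 : IsShortExact D kr r)
    (hn : n₁₂ ≫ n₂ = n₁) (hr : p₁ ≫ r = p₂) (ha : a₂ ≫ kr = n₂ ≫ p₁) :
    IsShortExact D n₁₂ a₂ := by
  obtain ⟨Z₀, hZ₀⟩ := HasZeroObject.zero (C := C)
  refine hD.three_by_three n₁₂ a₂ n₁ p₁ (0 : Z₀ ⟶ W₂) (𝟙 W₂)
    (𝟙 N₁) n₂ kr (0 : N₁ ⟶ Z₀) p₂ r
    (by rw [hn, Category.id_comp]) ha ?_ (by rw [hr, Category.comp_id])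
    (ses_id_zero hD N₁ Z₀ hZ₀) h2 h3 h1 (ses_zero_id hD Z₀ W₂ hZ₀)
  · rw [← hn, Category.assoc, h2.2.1, comp_zero, zero_comp]

/-- the join lemma. -/
lemma Joinlem (hD : IsWeaklyExact D) [HasZeroObject C]
    {Y W S X N XN : C}
    {n : N ⟶ Y} {p : Y ⟶ W} {i : X ⟶ Y} {s : Y ⟶ S}
    {xn : XN ⟶ X} {ξ : XN ⟶ N}
    (h1 : IsShortExact D n p) (h2 : IsShortExact D i s)
    (hip : D (i ≫ p)) (hxn : IsKernelOf xn (i ≫ p))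
    (hξ : ξ ≫ n = xn ≫ i) :
    IsShortExact D ξ (n ≫ s) := by
  obtain ⟨Z₀, hZ₀⟩ := HasZeroObject.zero (C := C)
  refine hD.three_by_three ξ (n ≫ s) i s (𝟙 W) (0 : W ⟶ Z₀)
    xn n (𝟙 S) (i ≫ p) p (0 : S ⟶ Z₀)
    hξ (by rw [Category.comp_id]) (by rw [Category.comp_id]) (by simp)
    ⟨hip, hxn⟩ h1 (ses_id_zero hD S Z₀ hZ₀) h2 (ses_id_zero hD W Z₀ hZ₀)

/-- Basic data attached to a differential object: the cycles `Z`, the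
inflation `lam : I ⟶ Z` and the deflation `h : Z ⟶ H`. -/
lemma mkPack (hD : IsWeaklyExact D) [HasZeroObject C] (X : DiffObjData D) :
    ∃ (Z : C) (z : Z ⟶ X.A) (lam : X.I ⟶ Z) (h : Z ⟶ X.H),
      lam ≫ z = X.m ∧ h ≫ X.k = z ≫ X.c ∧
      IsShortExact D z X.e ∧ IsShortExact D lam h ∧
      IsShortExact D X.m X.c ∧ IsShortExact D X.k X.t ∧ X.m ≫ X.e = 0 := by
  obtain ⟨Z₀, hZ₀⟩ := HasZeroObject.zero (C := C)
  have sesMC : IsShortExact D X.m X.c := infl_ker_coker hD X.infl_m X.coker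
  have hme : X.m ≫ X.e = 0 := by
    have h1 : X.e ≫ (X.m ≫ X.e) ≫ X.m = 0 := by
      have := X.dd
      rw [← X.fac] at this
      calc X.e ≫ (X.m ≫ X.e) ≫ X.m = (X.e ≫ X.m) ≫ X.e ≫ X.m := by
            simp only [Category.assoc]
        _ = 0 := this
    have h2 : (X.m ≫ X.e) ≫ X.m = 0 := defl_epi_cancel_zero hD X.defl_e h1
    exact sesMC.2.mono_cancel_zero h2
  have hDt : D X.t := by
    refine hD.defl_cancel X.c X.t ?_ sesMC.1
    rw [X.ht]; exact X.defl_e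
  have sesKT : IsShortExact D X.k X.t := ⟨hDt, X.ker⟩
  obtain ⟨Z, z, kz, -⟩ := hD.defl_kernel X.e X.defl_e
  have sesZ : IsShortExact D z X.e := ⟨X.defl_e, kz⟩
  obtain ⟨lam, hlam, -⟩ := kz.2 X.m hme
  have hzc : (z ≫ X.c) ≫ X.t = 0 := by
    rw [Category.assoc, X.ht, kz.1]
  obtain ⟨h, hh, -⟩ := X.ker.2 (z ≫ X.c) hzc
  refine ⟨Z, z, lam, h, hlam, hh, sesZ, ?_, sesMC, sesKT, hme⟩
  refine hD.three_by_three lam h X.m X.c (0 : Z₀ ⟶ X.I) (𝟙 X.I)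
    (𝟙 X.I) z X.k (0 : X.I ⟶ Z₀) X.e X.t
    (by rw [hlam, Category.id_comp]) hh (by simp [hme]) (by rw [X.ht, Category.comp_id])
    (ses_id_zero hD X.I Z₀ hZ₀) sesZ sesKT sesMC (ses_zero_id hD Z₀ X.I hZ₀)

end Helpers

/-- **Theorem 6.4.**  If `A ⟶ A' ⟶ A''` is a short exact sequence of
differential objects in a weakly exact category, then there is a connecting
morphism `H(A'') ⟶ H(A)` making the triangle
`H(A) ⟶ H(A') ⟶ H(A'') ⟶ H(A)` exact at each vertex. -/
theorem cohomology_triangle {C : Type u} [Category.{v} C] [HasZeroMorphisms C]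
    [HasZeroObject C] (D : MorphismProperty C) (hD : IsWeaklyExact D)
    (X X' X'' : DiffObjData D)
    (U : DiffHomData D X X') (V : DiffHomData D X' X'')
    (hses : IsShortExact D U.u V.u) :
    ∃ w : X''.H ⟶ X.H,
      ExactAt D w U.Hu ∧ ExactAt D U.Hu V.Hu ∧ ExactAt D V.Hu w := by
  obtain ⟨O, hO⟩ := HasZeroObject.zero (C := C)
  obtain ⟨Z0, z0, lam0, h0, hlam0, hh0, sesZ0, sesLH0, sesMC0, sesKT0, me0⟩ := mkPack hD X
  obtain ⟨Z1, z1, lam1, h1, hlam1, hh1, sesZ1, sesLH1, sesMC1, sesKT1, me1⟩ := mkPack hD X'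
  obtain ⟨Z2, z2, lam2, h2, hlam2, hh2, sesZ2, sesLH2, sesMC2, sesKT2, me2⟩ := mkPack hD X''
  have kz0 := sesZ0.2; have kz1 := sesZ1.2; have kz2 := sesZ2.2
  have kuv := hses.2
  have cokz0 : IsCokernelOf X.e z0 := coker_of_isKernelOf hD X.defl_e kz0
  have cokz1 : IsCokernelOf X'.e z1 := coker_of_isKernelOf hD X'.defl_e kz1
  -- the induced map uI : I ⟶ I'
  have hzue : (z0 ≫ U.u) ≫ X'.e = 0 := by
    refine sesMC1.2.mono_cancel_zero ?_
    calc ((z0 ≫ U.u) ≫ X'.e) ≫ X'.m = z0 ≫ U.u ≫ X'.d := by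
          rw [Category.assoc, Category.assoc, X'.fac]
      _ = z0 ≫ X.d ≫ U.u := by rw [U.comm]
      _ = ((z0 ≫ X.e) ≫ X.m) ≫ U.u := by rw [← X.fac]; simp only [Category.assoc]
      _ = 0 := by rw [kz0.1, zero_comp, zero_comp]
  obtain ⟨uI, huI, -⟩ := cokz0.2 (U.u ≫ X'.e) (by rw [← Category.assoc]; exact hzue)
  have huIm : uI ≫ X'.m = X.m ≫ U.u := by
    refine defl_epi_cancel hD X.defl_e ?_
    calc X.e ≫ uI ≫ X'.m = (X.e ≫ uI) ≫ X'.m := by rw [Category.assoc]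
      _ = U.u ≫ X'.e ≫ X'.m := by rw [huI, Category.assoc]
      _ = U.u ≫ X'.d := by rw [X'.fac]
      _ = X.d ≫ U.u := by rw [U.comm]
      _ = X.e ≫ X.m ≫ U.u := by rw [← X.fac, Category.assoc]
  have uImono0 : ∀ {T : C} {f : T ⟶ X.I}, f ≫ uI = 0 → f = 0 := by
    intro T f hf
    have h1' : (f ≫ X.m) ≫ U.u = 0 := by
      calc (f ≫ X.m) ≫ U.u = f ≫ X.m ≫ U.u := by rw [Category.assoc]
        _ = (f ≫ uI) ≫ X'.m := by rw [← huIm, Category.assoc]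
        _ = 0 := by rw [hf, zero_comp]
    exact sesMC0.2.mono_cancel_zero (kuv.mono_cancel_zero h1')
  obtain ⟨uZ, huZ, -⟩ := kz1.2 (z0 ≫ U.u) hzue
  -- the induced deflation vI : I' ⟶ I''
  have hzve : (z1 ≫ V.u) ≫ X''.e = 0 := by
    refine sesMC2.2.mono_cancel_zero ?_
    calc ((z1 ≫ V.u) ≫ X''.e) ≫ X''.m = z1 ≫ V.u ≫ X''.d := by
          rw [Category.assoc, Category.assoc, X''.fac]
      _ = z1 ≫ X'.d ≫ V.u := by rw [V.comm]
      _ = ((z1 ≫ X'.e) ≫ X'.m) ≫ V.u := by rw [← X'.fac]; simp only [Category.assoc]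
      _ = 0 := by rw [kz1.1, zero_comp, zero_comp]
  obtain ⟨vI, hvI, -⟩ := cokz1.2 (V.u ≫ X''.e) (by rw [← Category.assoc]; exact hzve)
  have DvI : D vI := by
    refine hD.defl_cancel X'.e vI ?_ X'.defl_e
    rw [hvI]; exact hD.defl_comp _ _ hses.1 X''.defl_e
  have hvIm : X'.m ≫ V.u = vI ≫ X''.m := by
    refine defl_epi_cancel hD X'.defl_e ?_
    calc X'.e ≫ X'.m ≫ V.u = (X'.e ≫ X'.m) ≫ V.u := by rw [Category.assoc]
      _ = V.u ≫ X''.d := by rw [X'.fac, V.comm]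
      _ = V.u ≫ X''.e ≫ X''.m := by rw [X''.fac]
      _ = (X'.e ≫ vI) ≫ X''.m := by rw [← Category.assoc, ← hvI]
      _ = X'.e ≫ vI ≫ X''.m := by rw [Category.assoc]
  -- vbar is a deflation, with kernel Kv
  have Dvc2 : D (V.u ≫ X''.c) := hD.defl_comp _ _ hses.1 sesMC2.1
  have Dvbar : D V.ubar := by
    refine hD.defl_cancel X'.c V.ubar ?_ sesMC1.1
    rw [V.hubar]; exact Dvc2
  obtain ⟨Kv, kbar, kKv, -⟩ := hD.defl_kernel V.ubar Dvbar
  -- P' = ker(v ≫ c'')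
  obtain ⟨P', j', kj', -⟩ := hD.defl_kernel (V.u ≫ X''.c) Dvc2
  obtain ⟨σ', hσ', -⟩ := sesMC2.2.2 (j' ≫ V.u) (by rw [Category.assoc]; exact kj'.1)
  obtain ⟨ω, hω, -⟩ := kj'.2 U.u (by rw [← Category.assoc, kuv.1, zero_comp])
  have sesPB1 : IsShortExact D ω σ' := PBlem hD hses sesMC2 kj' hσ' hω
  -- Q = ker(v ≫ e'')
  have Dve2 : D (V.u ≫ X''.e) := hD.defl_comp _ _ hses.1 X''.defl_e
  obtain ⟨Q, j, kj, -⟩ := hD.defl_kernel (V.u ≫ X''.e) Dve2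
  obtain ⟨θ, hθ, -⟩ := kz2.2 (j ≫ V.u) (by rw [Category.assoc]; exact kj.1)
  obtain ⟨ωQ, hωQ, -⟩ := kj.2 U.u (by rw [← Category.assoc, kuv.1, zero_comp])
  have sesPB2 : IsShortExact D ωQ θ := PBlem hD hses sesZ2 kj hθ hωQ
  -- μ : I' ⟶ P' and the deflation pb : P' ⟶ Kv
  have hmvc : X'.m ≫ V.u ≫ X''.c = 0 := by
    rw [← Category.assoc, hvIm, Category.assoc, sesMC2.2.1, comp_zero]
  obtain ⟨μ, hμ, -⟩ := kj'.2 X'.m hmvc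
  obtain ⟨pb, hpb, -⟩ := kKv.2 (j' ≫ X'.c) (by rw [Category.assoc, V.hubar]; exact kj'.1)
  have sesMuPb : IsShortExact D μ pb := KKlem hD sesMC1 ⟨Dvc2, kj'⟩ ⟨Dvbar, kKv⟩ hμ V.hubar hpb
  -- ζ, ρ, q, τ, ψ
  obtain ⟨ζ, hζ, -⟩ := kj.2 z1 (by rw [← Category.assoc]; exact hzve)
  obtain ⟨ρ, hρ, -⟩ := kj.2 j' (by
    rw [← Category.assoc, ← hσ', Category.assoc, me2, comp_zero])
  obtain ⟨q, hq, -⟩ := X''.ker.2 (j ≫ V.u ≫ X''.c) (by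
    simp only [Category.assoc]
    rw [X''.ht]; exact kj.1)
  have hqth : θ ≫ h2 = q := by
    refine X''.ker.mono_cancel ?_
    calc (θ ≫ h2) ≫ X''.k = θ ≫ z2 ≫ X''.c := by rw [Category.assoc, hh2]
      _ = (θ ≫ z2) ≫ X''.c := by rw [Category.assoc]
      _ = (j ≫ V.u) ≫ X''.c := by rw [hθ]
      _ = q ≫ X''.k := by rw [hq]; simp only [Category.assoc]
  have Dq : D q := by rw [← hqth]; exact hD.defl_comp _ _ sesPB2.1 sesLH2.1
  have kerρq : IsKernelOf ρ q := by
    have hρq : ρ ≫ q = 0 := by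
      refine X''.ker.mono_cancel_zero ?_
      calc (ρ ≫ q) ≫ X''.k = ρ ≫ j ≫ V.u ≫ X''.c := by rw [Category.assoc, hq]
        _ = (ρ ≫ j) ≫ V.u ≫ X''.c := by simp only [Category.assoc]
        _ = 0 := by rw [hρ]; exact kj'.1
    refine ⟨hρq, ?_⟩
    intro T g hg
    have hgj : (g ≫ j) ≫ V.u ≫ X''.c = 0 := by
      calc (g ≫ j) ≫ V.u ≫ X''.c = g ≫ j ≫ V.u ≫ X''.c := by simp only [Category.assoc]
        _ = g ≫ q ≫ X''.k := by rw [hq]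
        _ = 0 := by rw [← Category.assoc, hg, zero_comp]
    obtain ⟨h₀, hh₀, -⟩ := kj'.2 (g ≫ j) hgj
    refine ⟨h₀, kj.mono_cancel (by rw [Category.assoc, hρ, hh₀]), ?_⟩
    intro y hy
    refine kj'.mono_cancel ?_
    calc y ≫ j' = (y ≫ ρ) ≫ j := by rw [Category.assoc, hρ]
      _ = g ≫ j := by rw [hy]
      _ = h₀ ≫ j' := hh₀.symm
  -- τ : Q ⟶ A and ψ : A' ⟶ P'
  obtain ⟨τ, hτ, -⟩ := kuv.2 (j ≫ X'.d) (by
    calc (j ≫ X'.d) ≫ V.u = j ≫ X'.d ≫ V.u := by rw [Category.assoc]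
      _ = j ≫ V.u ≫ X''.d := by rw [V.comm]
      _ = (j ≫ V.u ≫ X''.e) ≫ X''.m := by rw [← X''.fac]; simp only [Category.assoc]
      _ = 0 := by rw [kj.1, zero_comp])
  obtain ⟨ψ, hψ, -⟩ := kj'.2 X'.d (by
    calc X'.d ≫ V.u ≫ X''.c = (X'.d ≫ V.u) ≫ X''.c := by rw [Category.assoc]
      _ = (V.u ≫ X''.d) ≫ X''.c := by rw [V.comm]
      _ = V.u ≫ X''.e ≫ X''.m ≫ X''.c := by rw [← X''.fac]; simp only [Category.assoc]
      _ = 0 := by rw [sesMC2.2.1, comp_zero, comp_zero])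
  have hωρ : ω ≫ ρ = ωQ := kj.mono_cancel (by rw [Category.assoc, hρ, hω, hωQ])
  have hωQτ : ωQ ≫ τ = X.d := kuv.mono_cancel (by
    calc (ωQ ≫ τ) ≫ U.u = ωQ ≫ j ≫ X'.d := by rw [Category.assoc, hτ]
      _ = (ωQ ≫ j) ≫ X'.d := by rw [Category.assoc]
      _ = U.u ≫ X'.d := by rw [hωQ]
      _ = X.d ≫ U.u := (U.comm).symm)
  have hψpb : ψ ≫ pb = 0 := kKv.mono_cancel_zero (by
    calc (ψ ≫ pb) ≫ kbar = ψ ≫ j' ≫ X'.c := by rw [Category.assoc, hpb]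
      _ = (ψ ≫ j') ≫ X'.c := by rw [Category.assoc]
      _ = (X'.e ≫ X'.m) ≫ X'.c := by rw [hψ, X'.fac]
      _ = 0 := by rw [Category.assoc, sesMC1.2.1, comp_zero])
  have hμσ : μ ≫ σ' = vI := sesMC2.2.mono_cancel (by
    calc (μ ≫ σ') ≫ X''.m = μ ≫ j' ≫ V.u := by rw [Category.assoc, hσ']
      _ = (μ ≫ j') ≫ V.u := by rw [Category.assoc]
      _ = X'.m ≫ V.u := by rw [hμ]
      _ = vI ≫ X''.m := hvIm)
  -- KI = ker vI and ξ : KI ⟶ A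
  obtain ⟨KI, xn, kxn, -⟩ := hD.defl_kernel vI DvI
  obtain ⟨ξ, hξ, -⟩ := kuv.2 (xn ≫ X'.m) (by
    calc (xn ≫ X'.m) ≫ V.u = xn ≫ X'.m ≫ V.u := by rw [Category.assoc]
      _ = (xn ≫ vI) ≫ X''.m := by rw [hvIm, Category.assoc]
      _ = 0 := by rw [kxn.1, zero_comp])
  have ximono : ∀ {T : C} {f g : T ⟶ KI}, f ≫ ξ = g ≫ ξ → f = g := by
    intro T f g hfg
    have h1' : (f ≫ xn) ≫ X'.m = (g ≫ xn) ≫ X'.m := by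
      calc (f ≫ xn) ≫ X'.m = f ≫ ξ ≫ U.u := by rw [Category.assoc, ← hξ]
        _ = g ≫ ξ ≫ U.u := by rw [← Category.assoc, hfg, Category.assoc]
        _ = (g ≫ xn) ≫ X'.m := by rw [hξ, Category.assoc]
    exact kxn.mono_cancel (sesMC1.2.mono_cancel h1')
  have hξω : ξ ≫ ω = xn ≫ μ := kj'.mono_cancel (by
    calc (ξ ≫ ω) ≫ j' = ξ ≫ U.u := by rw [Category.assoc, hω]
      _ = xn ≫ X'.m := hξ
      _ = (xn ≫ μ) ≫ j' := by rw [Category.assoc, hμ])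
  -- Join lemma : cb = ω ≫ pb is a deflation with kernel ξ
  have sesXiC : IsShortExact D ξ (ω ≫ pb) := by
    refine Joinlem hD sesPB1 sesMuPb ?_ ?_ hξω
    · rw [hμσ]; exact DvI
    · rw [hμσ]; exact kxn
  have hmω : X.m ≫ ω = uI ≫ μ := kj'.mono_cancel (by
    calc (X.m ≫ ω) ≫ j' = X.m ≫ U.u := by rw [Category.assoc, hω]
      _ = uI ≫ X'.m := huIm.symm
      _ = (uI ≫ μ) ≫ j' := by rw [Category.assoc, hμ])
  have hmcb : X.m ≫ ω ≫ pb = 0 := by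
    rw [← Category.assoc, hmω, Category.assoc, sesMuPb.2.1, comp_zero]
  obtain ⟨ι₀, hι₀, -⟩ := sesXiC.2.2 X.m hmcb
  -- Mu : CoA ⟶ Kv, a deflation, with kernel N'
  have hubv : U.ubar ≫ V.ubar = 0 := by
    refine defl_epi_cancel_zero hD sesMC0.1 ?_
    rw [← Category.assoc, U.hubar, Category.assoc, V.hubar, ← Category.assoc,
      kuv.1, zero_comp]
  obtain ⟨Mu, hMu, -⟩ := kKv.2 U.ubar hubv
  have hcMu : X.c ≫ Mu = ω ≫ pb := kKv.mono_cancel (by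
    calc (X.c ≫ Mu) ≫ kbar = X.c ≫ U.ubar := by rw [Category.assoc, hMu]
      _ = U.u ≫ X'.c := U.hubar
      _ = (ω ≫ j') ≫ X'.c := by rw [hω]
      _ = ω ≫ pb ≫ kbar := by rw [Category.assoc, ← hpb]
      _ = (ω ≫ pb) ≫ kbar := by rw [Category.assoc])
  have DMu : D Mu := by
    refine hD.defl_cancel X.c Mu ?_ sesMC0.1
    rw [hcMu]; exact sesXiC.1
  obtain ⟨N', ν', kν', -⟩ := hD.defl_kernel Mu DMu
  obtain ⟨νK, hνK, -⟩ := kν'.2 (ξ ≫ X.c) (by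
    rw [Category.assoc, hcMu]; exact sesXiC.2.1)
  have sesI0NuK : IsShortExact D ι₀ νK :=
    KKlem hD sesMC0 sesXiC ⟨DMu, kν'⟩ hι₀ hcMu hνK
  -- ξz, rr : Kv ⟶ I, RH, aZ
  have hξd : ξ ≫ X.d = 0 := kuv.mono_cancel_zero (by
    calc (ξ ≫ X.d) ≫ U.u = ξ ≫ X.d ≫ U.u := by rw [Category.assoc]
      _ = (ξ ≫ U.u) ≫ X'.d := by rw [U.comm, Category.assoc]
      _ = xn ≫ X'.m ≫ X'.d := by rw [hξ, Category.assoc]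
      _ = xn ≫ (X'.m ≫ X'.e) ≫ X'.m := by rw [← X'.fac]; simp only [Category.assoc]
      _ = 0 := by rw [me1, zero_comp, comp_zero])
  have hξe : ξ ≫ X.e = 0 := sesMC0.2.mono_cancel_zero (by
    rw [Category.assoc, X.fac, hξd])
  obtain ⟨ξz, hξz, -⟩ := kz0.2 ξ hξe
  have cokXiC : IsCokernelOf (ω ≫ pb) ξ := coker_of_isKernelOf hD sesXiC.1 sesXiC.2
  obtain ⟨rr, hrr, -⟩ := cokXiC.2 X.e hξe
  have Drr : D rr := by
    refine hD.defl_cancel (ω ≫ pb) rr ?_ sesXiC.1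
    rw [hrr]; exact X.defl_e
  obtain ⟨RH, ρR, kρR, -⟩ := hD.defl_kernel rr Drr
  obtain ⟨aZ, haZ, -⟩ := kρR.2 (z0 ≫ ω ≫ pb) (by
    rw [Category.assoc, hrr, kz0.1])
  have sesXizAZ : IsShortExact D ξz aZ :=
    KKlem hD sesXiC sesZ0 ⟨Drr, kρR⟩ hξz hrr haZ
  -- the short exact sequence Z' ⟶ Q ⟶ KI
  obtain ⟨τK, hτK, -⟩ := kxn.2 (j ≫ X'.e) (by
    rw [Category.assoc, hvI]; exact kj.1)
  have sesZetaTauK : IsShortExact D ζ τK := by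
    refine hD.three_by_three ζ τK z1 X'.e (0 : O ⟶ X''.I) (𝟙 X''.I)
      (𝟙 Z1) j xn (0 : Z1 ⟶ O) (V.u ≫ X''.e) vI
      (by rw [hζ, Category.id_comp]) hτK ?_ (by rw [hvI, Category.comp_id])
      (ses_id_zero hD Z1 O hO) ⟨Dve2, kj⟩ ⟨DvI, kxn⟩ sesZ1 (ses_zero_id hD O X''.I hO)
    · rw [← Category.assoc, hzve, zero_comp]
  have hτKξ : τK ≫ ξ = τ := kuv.mono_cancel (by
    calc (τK ≫ ξ) ≫ U.u = τK ≫ xn ≫ X'.m := by rw [Category.assoc, hξ]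
      _ = (j ≫ X'.e) ≫ X'.m := by rw [← Category.assoc, hτK]
      _ = j ≫ X'.d := by rw [Category.assoc, X'.fac]
      _ = τ ≫ U.u := hτ.symm)
  -- the γ-trick : ρ ≫ τ ≫ c = 0
  have cokω : IsCokernelOf σ' ω := coker_of_isKernelOf hD sesPB1.1 sesPB1.2
  have hψσ : ψ ≫ σ' = V.u ≫ X''.e := sesMC2.2.mono_cancel (by
    calc (ψ ≫ σ') ≫ X''.m = ψ ≫ j' ≫ V.u := by rw [Category.assoc, hσ']
      _ = (ψ ≫ j') ≫ V.u := by rw [Category.assoc]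
      _ = X'.d ≫ V.u := by rw [hψ]
      _ = V.u ≫ X''.d := V.comm
      _ = (V.u ≫ X''.e) ≫ X''.m := by rw [← X''.fac]; simp only [Category.assoc])
  have hψρτ : (ψ ≫ ρ) ≫ τ = 0 := kuv.mono_cancel_zero (by
    calc ((ψ ≫ ρ) ≫ τ) ≫ U.u = ψ ≫ ρ ≫ τ ≫ U.u := by simp only [Category.assoc]
      _ = ψ ≫ ρ ≫ j ≫ X'.d := by rw [hτ]
      _ = (ψ ≫ (ρ ≫ j)) ≫ X'.d := by simp only [Category.assoc]
      _ = (ψ ≫ j') ≫ X'.d := by rw [hρ]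
      _ = X'.d ≫ X'.d := by rw [hψ]
      _ = 0 := X'.dd)
  have hρτc : ρ ≫ τ ≫ X.c = 0 := by
    obtain ⟨γ, hγ, -⟩ := cokω.2 (ρ ≫ τ ≫ X.c) (by
      calc ω ≫ ρ ≫ τ ≫ X.c = ((ω ≫ ρ) ≫ τ) ≫ X.c := by simp only [Category.assoc]
        _ = (X.d) ≫ X.c := by rw [hωρ, hωQτ]
        _ = X.e ≫ X.m ≫ X.c := by rw [← X.fac, Category.assoc]
        _ = 0 := by rw [sesMC0.2.1, comp_zero])
    have hγ0 : γ = 0 := by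
      refine defl_epi_cancel_zero hD Dve2 ?_
      calc (V.u ≫ X''.e) ≫ γ = (ψ ≫ σ') ≫ γ := by rw [hψσ]
        _ = ψ ≫ ρ ≫ τ ≫ X.c := by rw [Category.assoc, hγ]
        _ = ((ψ ≫ ρ) ≫ τ) ≫ X.c := by simp only [Category.assoc]
        _ = 0 := by rw [hψρτ, zero_comp]
    rw [← hγ, hγ0, comp_zero]
  -- δN : Q ⟶ N'
  have hτω : τ ≫ ω = j ≫ ψ := kj'.mono_cancel (by
    calc (τ ≫ ω) ≫ j' = τ ≫ U.u := by rw [Category.assoc, hω]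
      _ = j ≫ X'.d := hτ
      _ = (j ≫ ψ) ≫ j' := by rw [Category.assoc, hψ])
  have hτcb : τ ≫ ω ≫ pb = 0 := by
    rw [← Category.assoc, hτω, Category.assoc, hψpb, comp_zero]
  obtain ⟨δN, hδN, -⟩ := kν'.2 (τ ≫ X.c) (by
    rw [Category.assoc, hcMu]; exact hτcb)
  have hδNfac : τK ≫ νK = δN := kν'.mono_cancel (by
    rw [Category.assoc, hνK, ← Category.assoc, hτKξ, hδN])
  have DδN : D δN := by rw [← hδNfac]; exact hD.defl_comp _ _ sesZetaTauK.1 sesI0NuK.1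
  -- the deflation pi2 : H'' ⟶ N' (coimage of the connecting morphism)
  have hρδN : ρ ≫ δN = 0 := kν'.mono_cancel_zero (by
    rw [Category.assoc, hδN]; exact hρτc)
  have cokq : IsCokernelOf q ρ := coker_of_isKernelOf hD Dq kerρq
  obtain ⟨pi2, hpi2, -⟩ := cokq.2 δN hρδN
  have Dpi2 : D pi2 := by
    refine hD.defl_cancel q pi2 ?_ Dq
    rw [hpi2]; exact DδN
  obtain ⟨K'', ι2, kι2, -⟩ := hD.defl_kernel pi2 Dpi2
  have hζδN : ζ ≫ δN = 0 := by
    rw [← hδNfac, ← Category.assoc, sesZetaTauK.2.1, zero_comp]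
  have hh1Hv : h1 ≫ V.Hu = ζ ≫ q := X''.ker.mono_cancel (by
    calc (h1 ≫ V.Hu) ≫ X''.k = h1 ≫ X'.k ≫ V.ubar := by rw [Category.assoc, V.hHu]
      _ = (h1 ≫ X'.k) ≫ V.ubar := by rw [Category.assoc]
      _ = (z1 ≫ X'.c) ≫ V.ubar := by rw [hh1]
      _ = z1 ≫ V.u ≫ X''.c := by rw [Category.assoc, V.hubar]
      _ = (ζ ≫ j) ≫ V.u ≫ X''.c := by rw [hζ]
      _ = ζ ≫ q ≫ X''.k := by rw [hq]; simp only [Category.assoc]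
      _ = (ζ ≫ q) ≫ X''.k := by rw [Category.assoc])
  have hHvpi2 : V.Hu ≫ pi2 = 0 := by
    refine defl_epi_cancel_zero hD sesLH1.1 ?_
    rw [← Category.assoc, hh1Hv, Category.assoc, hpi2, hζδN]
  -- ε : Kv ⟶ I' and ν'' : N' ⟶ H
  have cokμ : IsCokernelOf pb μ := coker_of_isKernelOf hD sesMuPb.1 sesMuPb.2
  obtain ⟨ε, hε, -⟩ := cokμ.2 (j' ≫ X'.e) (by
    rw [← Category.assoc, hμ, me1])
  have hMuε : Mu ≫ ε = X.t ≫ uI := by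
    refine defl_epi_cancel hD sesMC0.1 ?_
    calc X.c ≫ Mu ≫ ε = (X.c ≫ Mu) ≫ ε := by rw [Category.assoc]
      _ = ω ≫ pb ≫ ε := by rw [hcMu, Category.assoc]
      _ = (ω ≫ j') ≫ X'.e := by rw [hε]; simp only [Category.assoc]
      _ = U.u ≫ X'.e := by rw [hω]
      _ = X.e ≫ uI := huI.symm
      _ = (X.c ≫ X.t) ≫ uI := by rw [X.ht]
      _ = X.c ≫ X.t ≫ uI := by rw [Category.assoc]
  have hν't : ν' ≫ X.t = 0 := uImono0 (by
    rw [Category.assoc, ← hMuε, ← Category.assoc, kν'.1, zero_comp])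
  obtain ⟨ν'', hν'', -⟩ := X.ker.2 ν' hν't
  -- the deflation πH : H ⟶ RH with kernel ν''
  have hlamaZ : lam0 ≫ aZ = 0 := kρR.mono_cancel_zero (by
    rw [Category.assoc, haZ, ← Category.assoc, hlam0, hmcb])
  have coklam0 : IsCokernelOf h0 lam0 := coker_of_isKernelOf hD sesLH0.1 sesLH0.2
  obtain ⟨πH, hπH, -⟩ := coklam0.2 aZ hlamaZ
  have DπH : D πH := by
    refine hD.defl_cancel h0 πH ?_ sesLH0.1
    rw [hπH]; exact sesXizAZ.1
  have hπHρR : πH ≫ ρR = X.k ≫ Mu := by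
    refine defl_epi_cancel hD sesLH0.1 ?_
    calc h0 ≫ πH ≫ ρR = (h0 ≫ πH) ≫ ρR := by rw [Category.assoc]
      _ = z0 ≫ ω ≫ pb := by rw [hπH, haZ]
      _ = z0 ≫ X.c ≫ Mu := by rw [← hcMu]
      _ = (z0 ≫ X.c) ≫ Mu := by rw [Category.assoc]
      _ = (h0 ≫ X.k) ≫ Mu := by rw [hh0]
      _ = h0 ≫ X.k ≫ Mu := by rw [Category.assoc]
  have kerνπH : IsKernelOf ν'' πH := by
    have hν''πH : ν'' ≫ πH = 0 := kρR.mono_cancel_zero (by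
      calc (ν'' ≫ πH) ≫ ρR = ν'' ≫ X.k ≫ Mu := by rw [Category.assoc, hπHρR]
        _ = (ν'' ≫ X.k) ≫ Mu := by rw [Category.assoc]
        _ = ν' ≫ Mu := by rw [hν'']
        _ = 0 := kν'.1)
    refine ⟨hν''πH, ?_⟩
    intro T g hg
    have h1' : (g ≫ X.k) ≫ Mu = 0 := by
      calc (g ≫ X.k) ≫ Mu = g ≫ X.k ≫ Mu := by rw [Category.assoc]
        _ = g ≫ πH ≫ ρR := by rw [← hπHρR]
        _ = 0 := by rw [← Category.assoc, hg, zero_comp]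
    obtain ⟨α, hα, -⟩ := kν'.2 (g ≫ X.k) h1'
    refine ⟨α, X.ker.mono_cancel (by rw [Category.assoc, hν'', hα]), ?_⟩
    intro y hy
    refine kν'.mono_cancel ?_
    calc y ≫ ν' = (y ≫ ν'') ≫ X.k := by rw [Category.assoc, hν'']
      _ = g ≫ X.k := by rw [hy]
      _ = α ≫ ν' := hα.symm
  have hνHu : ν'' ≫ U.Hu = 0 := X'.ker.mono_cancel_zero (by
    calc (ν'' ≫ U.Hu) ≫ X'.k = ν'' ≫ X.k ≫ U.ubar := by rw [Category.assoc, U.hHu]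
      _ = (ν'' ≫ X.k) ≫ U.ubar := by rw [Category.assoc]
      _ = ν' ≫ U.ubar := by rw [hν'']
      _ = ν' ≫ Mu ≫ kbar := by rw [hMu]
      _ = 0 := by rw [← Category.assoc, kν'.1, zero_comp])
  have cokνπH : IsCokernelOf πH ν'' := coker_of_isKernelOf hD DπH kerνπH
  obtain ⟨bH, hbH, -⟩ := cokνπH.2 U.Hu hνHu
  -- the grid for exactness at H'
  have Dpbrr : D (pb ≫ rr) := hD.defl_comp _ _ sesMuPb.1 Drr
  obtain ⟨Kt, kt, kkt, -⟩ := hD.defl_kernel (pb ≫ rr) Dpbrr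
  obtain ⟨z₀m, hz₀m, -⟩ := cokμ.2 (j' ≫ X'.d) (by
    calc μ ≫ j' ≫ X'.d = X'.m ≫ X'.d := by rw [← Category.assoc, hμ]
      _ = (X'.m ≫ X'.e) ≫ X'.m := by rw [← X'.fac, Category.assoc]
      _ = 0 := by rw [me1, zero_comp])
  have hrrmu : rr ≫ X.m ≫ U.u = z₀m := by
    refine defl_epi_cancel hD sesXiC.1 ?_
    calc (ω ≫ pb) ≫ rr ≫ X.m ≫ U.u = ((ω ≫ pb) ≫ rr) ≫ X.m ≫ U.u := by
          simp only [Category.assoc]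
      _ = X.e ≫ X.m ≫ U.u := by rw [hrr]
      _ = X.d ≫ U.u := by rw [← X.fac, Category.assoc]
      _ = U.u ≫ X'.d := U.comm
      _ = (ω ≫ j') ≫ X'.d := by rw [hω]
      _ = ω ≫ pb ≫ z₀m := by rw [hz₀m]; simp only [Category.assoc]
      _ = (ω ≫ pb) ≫ z₀m := by rw [Category.assoc]
  have goalB : pb ≫ rr ≫ X.m = ρ ≫ τ := kuv.mono_cancel (by
    calc (pb ≫ rr ≫ X.m) ≫ U.u = pb ≫ rr ≫ X.m ≫ U.u := by simp only [Category.assoc]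
      _ = pb ≫ z₀m := by rw [hrrmu]
      _ = j' ≫ X'.d := hz₀m
      _ = (ρ ≫ j) ≫ X'.d := by rw [hρ]
      _ = (ρ ≫ τ) ≫ U.u := by rw [Category.assoc, ← hτ, Category.assoc])
  have hjepbrr : j' ≫ X'.e = pb ≫ rr ≫ uI := sesMC1.2.mono_cancel (by
    calc (j' ≫ X'.e) ≫ X'.m = j' ≫ X'.d := by rw [Category.assoc, X'.fac]
      _ = pb ≫ z₀m := hz₀m.symm
      _ = pb ≫ rr ≫ X.m ≫ U.u := by rw [hrrmu]
      _ = (pb ≫ rr ≫ uI) ≫ X'.m := by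
          simp only [Category.assoc]; rw [huIm])
  obtain ⟨kt', hkt', -⟩ := kz1.2 (kt ≫ j') (by
    calc (kt ≫ j') ≫ X'.e = kt ≫ j' ≫ X'.e := by rw [Category.assoc]
      _ = kt ≫ pb ≫ rr ≫ uI := by rw [hjepbrr]
      _ = (kt ≫ (pb ≫ rr)) ≫ uI := by simp only [Category.assoc]
      _ = 0 := by rw [kkt.1, zero_comp])
  obtain ⟨Pi1, hPi1, -⟩ := kι2.2 (ζ ≫ q) (by
    rw [Category.assoc, hpi2, hζδN])
  have hktζ : kt' ≫ ζ = kt ≫ ρ := kj.mono_cancel (by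
    rw [Category.assoc, hζ, hkt', Category.assoc, hρ])
  have hρτK : ρ ≫ τK = (pb ≫ rr) ≫ ι₀ := ximono (by
    calc (ρ ≫ τK) ≫ ξ = ρ ≫ τ := by rw [Category.assoc, hτKξ]
      _ = pb ≫ rr ≫ X.m := goalB.symm
      _ = ((pb ≫ rr) ≫ ι₀) ≫ ξ := by rw [Category.assoc, hι₀]; simp only [Category.assoc])
  have sesKtPi : IsShortExact D kt' Pi1 := by
    refine hD.three_by_three kt' Pi1 ρ q ι₀ νK
      kt ζ ι2 (pb ≫ rr) τK pi2
      hktζ hPi1 hρτK (by rw [hpi2, hδNfac])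
      ⟨Dpbrr, kkt⟩ sesZetaTauK ⟨Dpi2, kι2⟩ ⟨Dq, kerρq⟩ sesI0NuK
  -- descend to the deflation π' : H' ⟶ K''
  have hlamζq : lam1 ≫ ζ ≫ q = 0 := X''.ker.mono_cancel_zero (by
    calc (lam1 ≫ ζ ≫ q) ≫ X''.k = lam1 ≫ ζ ≫ j ≫ V.u ≫ X''.c := by
          simp only [Category.assoc]; rw [hq]
      _ = (lam1 ≫ (ζ ≫ j)) ≫ V.u ≫ X''.c := by simp only [Category.assoc]
      _ = (lam1 ≫ z1) ≫ V.u ≫ X''.c := by rw [hζ]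
      _ = X'.m ≫ V.u ≫ X''.c := by rw [hlam1]
      _ = 0 := hmvc)
  have hlamPi1 : lam1 ≫ Pi1 = 0 := kι2.mono_cancel_zero (by
    rw [Category.assoc, hPi1]; exact hlamζq)
  have coklam1 : IsCokernelOf h1 lam1 := coker_of_isKernelOf hD sesLH1.1 sesLH1.2
  obtain ⟨π', hπ', -⟩ := coklam1.2 Pi1 hlamPi1
  have Dπ' : D π' := by
    refine hD.defl_cancel h1 π' ?_ sesLH1.1
    rw [hπ']; exact sesKtPi.1
  have hπ'ι2 : π' ≫ ι2 = V.Hu := by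
    refine defl_epi_cancel hD sesLH1.1 ?_
    rw [← Category.assoc, hπ', hPi1, hh1Hv]
  obtain ⟨K', ι1, kι1, -⟩ := hD.defl_kernel π' Dπ'
  -- Hu ≫ Hv = 0
  have huZζ : uZ ≫ ζ = z0 ≫ ωQ := kj.mono_cancel (by
    rw [Category.assoc, hζ, huZ, Category.assoc, hωQ])
  have hh0Hu : h0 ≫ U.Hu = uZ ≫ h1 := X'.ker.mono_cancel (by
    calc (h0 ≫ U.Hu) ≫ X'.k = h0 ≫ X.k ≫ U.ubar := by rw [Category.assoc, U.hHu]
      _ = (h0 ≫ X.k) ≫ U.ubar := by rw [Category.assoc]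
      _ = (z0 ≫ X.c) ≫ U.ubar := by rw [hh0]
      _ = z0 ≫ U.u ≫ X'.c := by rw [Category.assoc, U.hubar]
      _ = (uZ ≫ z1) ≫ X'.c := by rw [huZ, Category.assoc]
      _ = uZ ≫ h1 ≫ X'.k := by rw [hh1]; simp only [Category.assoc]
      _ = (uZ ≫ h1) ≫ X'.k := by rw [Category.assoc])
  have hωQq : ωQ ≫ q = 0 := by
    rw [← hqth, ← Category.assoc, sesPB2.2.1, zero_comp]
  have hHuHv : U.Hu ≫ V.Hu = 0 := by
    refine defl_epi_cancel_zero hD sesLH0.1 ?_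
    rw [← Category.assoc, hh0Hu, Category.assoc, hh1Hv, ← Category.assoc, huZζ,
      Category.assoc, hωQq, comp_zero]
  have hHuπ' : U.Hu ≫ π' = 0 := kι2.mono_cancel_zero (by
    rw [Category.assoc, hπ'ι2, hHuHv])
  obtain ⟨aH', haH', -⟩ := kι1.2 U.Hu hHuπ'
  obtain ⟨aH2, haH2, -⟩ := kι2.2 V.Hu hHvpi2
  -- assemble
  refine ⟨pi2 ≫ ν'', ?_, ?_, ?_⟩
  · exact ⟨N', RH, pi2, ν'', πH, bH, rfl, hbH.symm, ⟨DπH, kerνπH⟩⟩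
  · exact ⟨K', K'', aH', ι1, π', ι2, haH'.symm, hπ'ι2.symm, ⟨Dπ', kι1⟩⟩
  · exact ⟨K'', N', aH2, ι2, pi2, ν'', haH2.symm, rfl, ⟨Dpi2, kι2⟩⟩
end
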